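/- arXiv:1007.1484 — 3 statements merged into one kernel-verified Lean document; each statement's English description precedes it below -/
import Mathlib

section
/- Let G be a finite directed flow network with nonnegative real edge capacities, and let P, Q, R be a partition of a set of designated terminal vertices into three disjoint subsets. Denote by (S ↛ T) the minimum capacity of an edge cut with all of S on the source side and all of T on the sink side. Then (P ↛ Q∪R) ≤ (P∪Q ↛ R) + (P∪R ↛ Q). -/
open Finset

/-- Capacity of the cut determined by vertex set `A`: total capacity of edges leaving `A`. -/
def cutCap {V : Type} [Fintype V] [DecidableEq V] (c : V → V → ℝ) (A : Finset V) : ℝ :=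
  ∑ u ∈ A, ∑ v ∈ Aᶜ, c u v

/-- Minimum capacity of a cut with all of `S` on the source side and all of `T` on the sink side. -/
noncomputable def minCut {V : Type} [Fintype V] [DecidableEq V] (c : V → V → ℝ) (S T : Finset V) : ℝ :=
  sInf {x : ℝ | ∃ A : Finset V, S ⊆ A ∧ Disjoint T A ∧ x = cutCap c A}

/-- Net outflow of `f` at vertex `v`. -/
def netOut {V : Type} [Fintype V] (f : V → V → ℝ) (v : V) : ℝ :=
  (∑ w, f v w) - ∑ w, f w v

/-- `f` is an external flow in the network with capacities `c`, terminals `q` and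
terminal net-outflow values `x`. -/
def IsExtFlow {V : Type} [Fintype V] {k : ℕ} (c f : V → V → ℝ) (q : Fin k → V)
    (x : Fin k → ℝ) : Prop :=
  (∀ u v, 0 ≤ f u v ∧ f u v ≤ c u v) ∧
  (∀ v, (∀ i, q i ≠ v) → netOut f v = 0) ∧
  (∀ i, netOut f (q i) = x i)

/-!
If `A` is a minimum cut separating `P ∪ Q` from `R` and `B` one separating `P ∪ R` from `Q`, then
`A ∩ B` separates `P` from `Q ∪ R`. Submodularity of the cut function together with nonnegativity
of capacities gives `cutCap (A ∩ B) ≤ cutCap (A ∩ B) + cutCap (A ∪ B) ≤ cutCap A + cutCap B`.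
-/

section
variable {V : Type} [Fintype V] [DecidableEq V] (c : V → V → ℝ)

lemma cutCap_eq_sum_ite (A : Finset V) :
    cutCap c A = ∑ u, ∑ v, if u ∈ A ∧ v ∉ A then c u v else 0 := by
  simp only [cutCap, ite_and, ← Finset.mem_compl, Finset.sum_ite_irrel, Finset.sum_const_zero,
    Finset.sum_ite_mem, Finset.univ_inter]

variable {c}

lemma cutCap_nonneg (hc : ∀ u v, 0 ≤ c u v) (A : Finset V) : 0 ≤ cutCap c A :=
  Finset.sum_nonneg fun u _ => Finset.sum_nonneg fun v _ => hc u v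

lemma cutCap_inter_add_cutCap_union_le (hc : ∀ u v, 0 ≤ c u v) (A B : Finset V) :
    cutCap c (A ∩ B) + cutCap c (A ∪ B) ≤ cutCap c A + cutCap c B := by
  simp only [cutCap_eq_sum_ite, ← Finset.sum_add_distrib]
  refine Finset.sum_le_sum fun u _ => Finset.sum_le_sum fun v _ => ?_
  have := hc u v
  by_cases huA : u ∈ A <;> by_cases huB : u ∈ B <;> by_cases hvA : v ∈ A <;>
    by_cases hvB : v ∈ B <;> simp [huA, huB, hvA, hvB] <;> linarith

lemma minCut_le_cutCap (hc : ∀ u v, 0 ≤ c u v) {S T A : Finset V} (hSA : S ⊆ A)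
    (hTA : Disjoint T A) : minCut c S T ≤ cutCap c A :=
  csInf_le ⟨0, fun _ ⟨B, _, _, hx⟩ => hx ▸ cutCap_nonneg hc B⟩ ⟨A, hSA, hTA, rfl⟩

lemma exists_cutCap_eq_minCut {S T : Finset V} (hST : Disjoint S T) :
    ∃ A, S ⊆ A ∧ Disjoint T A ∧ cutCap c A = minCut c S T := by
  have hne : {x : ℝ | ∃ A : Finset V, S ⊆ A ∧ Disjoint T A ∧ x = cutCap c A}.Nonempty :=
    ⟨_, Tᶜ, Finset.subset_compl_iff_disjoint_right.mpr hST, disjoint_compl_right, rfl⟩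
  have hfin : {x : ℝ | ∃ A : Finset V, S ⊆ A ∧ Disjoint T A ∧ x = cutCap c A}.Finite :=
    (Set.finite_range (cutCap c)).subset fun _ ⟨A, _, _, hx⟩ => ⟨A, hx.symm⟩
  obtain ⟨A, hSA, hTA, hA⟩ := hne.csInf_mem hfin
  exact ⟨A, hSA, hTA, hA.symm⟩

end

theorem stmt0 {V : Type} [Fintype V] [DecidableEq V] (c : V → V → ℝ)
    (hc : ∀ u v, 0 ≤ c u v) (P Q R : Finset V)
    (hPQ : Disjoint P Q) (hPR : Disjoint P R) (hQR : Disjoint Q R) :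
    minCut c P (Q ∪ R) ≤ minCut c (P ∪ Q) R + minCut c (P ∪ R) Q := by
  obtain ⟨A, hPQA, hRA, hA⟩ :=
    exists_cutCap_eq_minCut (c := c) (Finset.disjoint_union_left.mpr ⟨hPR, hQR⟩)
  obtain ⟨B, hPRB, hQB, hB⟩ :=
    exists_cutCap_eq_minCut (c := c) (Finset.disjoint_union_left.mpr ⟨hPQ, hQR.symm⟩)
  have hAB : minCut c P (Q ∪ R) ≤ cutCap c (A ∩ B) :=
    minCut_le_cutCap hc
      (Finset.subset_inter (Finset.union_subset_left hPQA) (Finset.union_subset_left hPRB))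
      (Finset.disjoint_union_left.mpr
        ⟨hQB.mono_right Finset.inter_subset_right, hRA.mono_right Finset.inter_subset_left⟩)
  have := cutCap_inter_add_cutCap_union_le hc A B
  have := cutCap_nonneg hc (A ∪ B)
  linarith
end

section
/- In an undirected flow network with three terminals a, b, c, the triangle network on vertices {a,b,c} with undirected edge capacities c(ab) = ½((a ↛ bc) + (b ↛ ac) − (c ↛ ab)), c(ac) = ½((a ↛ bc) + (c ↛ ab) − (b ↛ ac)), c(bc) = ½((b ↛ ac) + (c ↛ ab) − (a ↛ bc)) has, for each terminal q, minimum cut value separating q from the other two terminals equal to (q ↛ {a,b,c}∖{q}) in the original network, provided all three prescribed capacities are nonnegative. -/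
open Finset

/-- The triangle network on vertices `a=0, b=1, c=2` with symmetric (undirected)
edge capacities `p = c(ab)`, `q = c(ac)`, `r = c(bc)`. -/
def triCap (p q r : ℝ) (u v : Fin 3) : ℝ :=
  if (u = 0 ∧ v = 1) ∨ (u = 1 ∧ v = 0) then p
  else if (u = 0 ∧ v = 2) ∨ (u = 2 ∧ v = 0) then q
  else if (u = 1 ∧ v = 2) ∨ (u = 2 ∧ v = 1) then r
  else 0

/-
In the triangle every vertex is a terminal, so the only cut separating `q` from the other
two terminals is `{q}` itself, of capacity the sum of the two edge capacities at `q`.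
The prescribed capacities are chosen exactly so that each of these three sums is `(q ↛ ·)`.
-/

theorem minCut_compl {V : Type} [Fintype V] [DecidableEq V] (c : V → V → ℝ) (S : Finset V) :
    minCut c S Sᶜ = cutCap c S := by
  have hcuts : {x : ℝ | ∃ A : Finset V, S ⊆ A ∧ Disjoint Sᶜ A ∧ x = cutCap c A}
      = {cutCap c S} := by
    ext x
    constructor
    · rintro ⟨A, hSA, hdisj, rfl⟩
      have hAS : A ⊆ S := fun v hv ↦ by
        by_contra hvS
        exact disjoint_left.mp hdisj (mem_compl.mpr hvS) hv
      rw [Set.mem_singleton_iff, Subset.antisymm hAS hSA]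
    · rintro rfl
      exact ⟨S, Subset.refl S, disjoint_compl_left, rfl⟩
  rw [minCut, hcuts, csInf_singleton]

theorem cutCap_triCap_zero (p q r : ℝ) : cutCap (triCap p q r) {0} = p + q := by
  simp [cutCap, triCap, show ({0} : Finset (Fin 3))ᶜ = {1, 2} by decide]

theorem cutCap_triCap_one (p q r : ℝ) : cutCap (triCap p q r) {1} = p + r := by
  simp [cutCap, triCap, show ({1} : Finset (Fin 3))ᶜ = {0, 2} by decide]

theorem cutCap_triCap_two (p q r : ℝ) : cutCap (triCap p q r) {2} = q + r := by
  simp [cutCap, triCap, show ({2} : Finset (Fin 3))ᶜ = {0, 1} by decide]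

theorem stmt9_general {V : Type} [Fintype V] [DecidableEq V] (c : V → V → ℝ)
    (a b d : V) :
    minCut
        (triCap ((minCut c {a} {b, d} + minCut c {b} {a, d} - minCut c {d} {a, b}) / 2)
                ((minCut c {a} {b, d} + minCut c {d} {a, b} - minCut c {b} {a, d}) / 2)
                ((minCut c {b} {a, d} + minCut c {d} {a, b} - minCut c {a} {b, d}) / 2))
        {(0 : Fin 3)} {1, 2} = minCut c {a} {b, d} ∧
    minCut
        (triCap ((minCut c {a} {b, d} + minCut c {b} {a, d} - minCut c {d} {a, b}) / 2)
                ((minCut c {a} {b, d} + minCut c {d} {a, b} - minCut c {b} {a, d}) / 2)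
                ((minCut c {b} {a, d} + minCut c {d} {a, b} - minCut c {a} {b, d}) / 2))
        {(1 : Fin 3)} {0, 2} = minCut c {b} {a, d} ∧
    minCut
        (triCap ((minCut c {a} {b, d} + minCut c {b} {a, d} - minCut c {d} {a, b}) / 2)
                ((minCut c {a} {b, d} + minCut c {d} {a, b} - minCut c {b} {a, d}) / 2)
                ((minCut c {b} {a, d} + minCut c {d} {a, b} - minCut c {a} {b, d}) / 2))
        {(2 : Fin 3)} {0, 1} = minCut c {d} {a, b} := by
  rw [show ({1, 2} : Finset (Fin 3)) = {0}ᶜ by decide,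
    show ({0, 2} : Finset (Fin 3)) = {1}ᶜ by decide,
    show ({0, 1} : Finset (Fin 3)) = {2}ᶜ by decide,
    minCut_compl, minCut_compl, minCut_compl,
    cutCap_triCap_zero, cutCap_triCap_one, cutCap_triCap_two]
  refine ⟨?_, ?_, ?_⟩ <;> ring

theorem stmt9 {V : Type} [Fintype V] [DecidableEq V] (c : V → V → ℝ)
    (hsymm : ∀ u v, c u v = c v u) (hc : ∀ u v, 0 ≤ c u v)
    (a b d : V) (hab : a ≠ b) (had : a ≠ d) (hbd : b ≠ d)
    (hp : 0 ≤ (minCut c {a} {b, d} + minCut c {b} {a, d} - minCut c {d} {a, b}) / 2)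
    (hq : 0 ≤ (minCut c {a} {b, d} + minCut c {d} {a, b} - minCut c {b} {a, d}) / 2)
    (hr : 0 ≤ (minCut c {b} {a, d} + minCut c {d} {a, b} - minCut c {a} {b, d}) / 2) :
    minCut
        (triCap ((minCut c {a} {b, d} + minCut c {b} {a, d} - minCut c {d} {a, b}) / 2)
                ((minCut c {a} {b, d} + minCut c {d} {a, b} - minCut c {b} {a, d}) / 2)
                ((minCut c {b} {a, d} + minCut c {d} {a, b} - minCut c {a} {b, d}) / 2))
        {(0 : Fin 3)} {1, 2} = minCut c {a} {b, d} ∧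
    minCut
        (triCap ((minCut c {a} {b, d} + minCut c {b} {a, d} - minCut c {d} {a, b}) / 2)
                ((minCut c {a} {b, d} + minCut c {d} {a, b} - minCut c {b} {a, d}) / 2)
                ((minCut c {b} {a, d} + minCut c {d} {a, b} - minCut c {a} {b, d}) / 2))
        {(1 : Fin 3)} {0, 2} = minCut c {b} {a, d} ∧
    minCut
        (triCap ((minCut c {a} {b, d} + minCut c {b} {a, d} - minCut c {d} {a, b}) / 2)
                ((minCut c {a} {b, d} + minCut c {d} {a, b} - minCut c {b} {a, d}) / 2)
                ((minCut c {b} {a, d} + minCut c {d} {a, b} - minCut c {a} {b, d}) / 2))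
        {(2 : Fin 3)} {0, 1} = minCut c {d} {a, b} :=
  stmt9_general c a b d
end

section
/- Let G be a finite directed flow network with terminals s and t, and suppose G is the 2-clique-sum at a vertex pair {u, v} of networks G_1 (containing s and t) and G_2. Let H_2 be any network with terminals u, v such that all min-cut values between nonempty complementary subsets of {u, v} agree with those of G_2 (with the terminals of G_2 being u, v). Then the maximum s–t flow value in G equals the maximum s–t flow value in the network obtained from G by replacing G_2 with H_2 (glued at u, v). -/
open Finset

/-- Identification map for the 2-clique-sum: the two gluing vertices `u2, v2` of the
second network are identified with `u, v` of the first. -/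
def glueMap {V1 V2 : Type} [DecidableEq V2] (u v : V1) (u2 v2 : V2) :
    V2 → V1 ⊕ {w : V2 // w ≠ u2 ∧ w ≠ v2} := fun w =>
  if h1 : w = u2 then Sum.inl u
  else if h2 : w = v2 then Sum.inl v
  else Sum.inr ⟨w, h1, h2⟩

/-- Capacities of the 2-clique-sum of two networks at `{u,v} = {u2,v2}`. -/
def glueCap {V1 V2 : Type} [Fintype V2] [DecidableEq V1] [DecidableEq V2]
    (c1 : V1 → V1 → ℝ) (c2 : V2 → V2 → ℝ) (u v : V1) (u2 v2 : V2) :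
    (V1 ⊕ {w : V2 // w ≠ u2 ∧ w ≠ v2}) → (V1 ⊕ {w : V2 // w ≠ u2 ∧ w ≠ v2}) → ℝ :=
  fun x y =>
    (match x, y with
      | Sum.inl p, Sum.inl q => c1 p q
      | _, _ => 0) +
    ∑ w : V2, ∑ z : V2,
      if glueMap u v u2 v2 w = x ∧ glueMap u v u2 v2 z = y then c2 w z else 0

/-- Maximum value of a feasible `s`–`t` flow. -/
noncomputable def maxFlowVal {V : Type} [Fintype V] (c : V → V → ℝ) (s t : V) : ℝ :=
  sSup {F : ℝ | ∃ f : V → V → ℝ,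
    (∀ u v, 0 ≤ f u v ∧ f u v ≤ c u v) ∧
    (∀ w, w ≠ s → w ≠ t → netOut f w = 0) ∧ netOut f s = F}

/-!
In a network with nonnegative capacities, the net outflows at `p` of the feasible flows that are
conserved away from `p` and `q` form exactly the interval `[-minCut {q} {p}, minCut {p} {q}]`.
The upper end is max-flow/min-cut: a maximum flow exists by compactness, and the vertices
reachable from `p` in its residual graph form a saturated cut. The lower end is the same statement
for the reversed pair, and the set of values is convex. Hence `G₂` and `H₂` admit the same flow
values between their terminals. A feasible flow in the clique-sum splits into a flow inside `G₁`
and a flow of `G₂` conserved away from `u` and `v`; replacing the latter by a flow of `H₂` with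
the same value leaves the net outflow at every vertex of `G₁` unchanged. So the two glued
networks have the same set of `s`–`t` flow values.
-/

open Topology

namespace Network

section Flows

variable {V : Type}

def Feasible (c f : V → V → ℝ) : Prop := ∀ a b, 0 ≤ f a b ∧ f a b ≤ c a b

theorem Feasible.add {a b f g : V → V → ℝ} (hf : Feasible a f) (hg : Feasible b g) :
    Feasible (a + b) (f + g) := fun x y =>
  ⟨add_nonneg (hf x y).1 (hg x y).1, add_le_add (hf x y).2 (hg x y).2⟩

theorem Feasible.exists_add {a b f : V → V → ℝ} (hf : Feasible (a + b) f)
    (ha : ∀ x y, 0 ≤ a x y) (hb : ∀ x y, 0 ≤ b x y) :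
    ∃ f₁ f₂, Feasible a f₁ ∧ Feasible b f₂ ∧ f = f₁ + f₂ := by
  refine ⟨fun x y => min (f x y) (a x y), fun x y => f x y - min (f x y) (a x y),
    fun x y => ⟨le_min (hf x y).1 (ha x y), min_le_right _ _⟩, fun x y => ⟨?_, ?_⟩, ?_⟩
  · exact sub_nonneg.2 (min_le_left _ _)
  · have := (hf x y).2
    simp only [Pi.add_apply] at this
    rcases min_cases (f x y) (a x y) with h | h <;> linarith [hb x y]
  · ext x y
    simp

def ResidualAdj (c f : V → V → ℝ) (a b : V) : Prop := f a b < c a b ∨ 0 < f b a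

def IsAugmenting (c f Δ : V → V → ℝ) : Prop :=
  ∀ a b, (0 < Δ a b → f a b < c a b) ∧ (Δ a b < 0 → 0 < f a b)

theorem Feasible.exists_add_smul [Finite V] {c f Δ : V → V → ℝ} (hf : Feasible c f)
    (hΔ : IsAugmenting c f Δ) : ∃ δ : ℝ, 0 < δ ∧ Feasible c (f + δ • Δ) := by
  have hedge (a b : V) :
      ∀ᶠ δ in 𝓝[>] 0, 0 ≤ f a b + δ * Δ a b ∧ f a b + δ * Δ a b ≤ c a b := by
    have hcont : Continuous fun δ : ℝ => f a b + δ * Δ a b := by fun_prop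
    have hlim : Filter.Tendsto (fun δ : ℝ => f a b + δ * Δ a b) (𝓝[>] 0) (𝓝 (f a b)) :=
      tendsto_nhdsWithin_of_tendsto_nhds (by simpa using hcont.tendsto 0)
    rcases lt_trichotomy (Δ a b) 0 with hneg | hzero | hpos
    · filter_upwards [self_mem_nhdsWithin, hlim.eventually_const_lt ((hΔ a b).2 hneg)]
        with δ (hδ : 0 < δ) hlow
      exact ⟨hlow.le, by nlinarith [(hf a b).2]⟩
    · exact .of_forall fun δ => by simpa [hzero] using hf a b
    · filter_upwards [self_mem_nhdsWithin, hlim.eventually_lt_const ((hΔ a b).1 hpos)]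
        with δ (hδ : 0 < δ) hup
      exact ⟨by nlinarith [(hf a b).1], hup.le⟩
  obtain ⟨δ, hδ, hpos⟩ := ((Filter.eventually_all.2 fun a =>
    Filter.eventually_all.2 (hedge a)).and self_mem_nhdsWithin).exists
  exact ⟨δ, hpos, hδ⟩

variable [Fintype V]

def Conserves (f : V → V → ℝ) (s t : V) : Prop := ∀ w, w ≠ s → w ≠ t → netOut f w = 0

def flowValues (c : V → V → ℝ) (s t : V) : Set ℝ :=
  {F | ∃ f, Feasible c f ∧ Conserves f s t ∧ netOut f s = F}

theorem maxFlowVal_eq_sSup (c : V → V → ℝ) (s t : V) :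
    maxFlowVal c s t = sSup (flowValues c s t) := rfl

theorem Conserves.symm {f : V → V → ℝ} {s t : V} (h : Conserves f s t) : Conserves f t s :=
  fun w ht hs => h w hs ht

theorem netOut_add (f g : V → V → ℝ) : netOut (f + g) = netOut f + netOut g := by
  ext w
  simp only [netOut, Pi.add_apply, sum_add_distrib]
  ring

theorem netOut_sub (f g : V → V → ℝ) : netOut (f - g) = netOut f - netOut g := by
  ext w
  simp only [netOut, Pi.sub_apply, sum_sub_distrib]
  ring

theorem netOut_smul (r : ℝ) (f : V → V → ℝ) : netOut (r • f) = r • netOut f := by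
  ext w
  simp only [netOut, Pi.smul_apply, smul_eq_mul, ← mul_sum]
  ring

theorem sum_netOut (f : V → V → ℝ) : ∑ v, netOut f v = 0 := by
  simp only [netOut, sum_sub_distrib]
  rw [sum_comm, sub_self]

theorem Conserves.netOut_target_eq_neg {f : V → V → ℝ} {s t : V} (h : Conserves f s t)
    (hst : s ≠ t) : netOut f t = -netOut f s := by
  classical
  have hsum : ∑ v, netOut f v = netOut f s + netOut f t := by
    rw [← sum_subset (subset_univ {s, t}), sum_pair hst]
    intro w _ hw
    simp only [mem_insert, mem_singleton, not_or] at hw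
    exact h w hw.1 hw.2
  linarith [sum_netOut f]

theorem continuous_netOut (w : V) : Continuous fun f : V → V → ℝ => netOut f w := by
  unfold netOut
  fun_prop

theorem exists_isGreatest_flowValues {c : V → V → ℝ} (hc : ∀ a b, 0 ≤ c a b) (s t : V) :
    ∃ f, Feasible c f ∧ Conserves f s t ∧ IsGreatest (flowValues c s t) (netOut f s) := by
  let K : Set (V → V → ℝ) := {f | Feasible c f ∧ Conserves f s t}
  have hbox : K ⊆ Set.univ.pi fun a => Set.univ.pi fun b => Set.Icc 0 (c a b) :=
    fun f hf a _ b _ => hf.1 a b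
  have hclosed : IsClosed K := by
    simp only [K, Feasible, Conserves, Set.ofPred_and, Set.ofPred_forall]
    refine .inter (isClosed_iInter fun a => isClosed_iInter fun b => ?_)
      (isClosed_iInter fun w => isClosed_iInter fun _ => isClosed_iInter fun _ => ?_)
    · exact (isClosed_le continuous_const (by fun_prop)).inter
        (isClosed_le (by fun_prop) continuous_const)
    · exact isClosed_eq (continuous_netOut w) continuous_const
  have hK : IsCompact K := (isCompact_univ_pi fun a => isCompact_univ_pi fun b => isCompact_Icc)
    |>.of_isClosed_subset hclosed hbox
  have hzero : (0 : V → V → ℝ) ∈ K :=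
    ⟨fun a b => ⟨le_rfl, hc a b⟩, fun w _ _ => by simp [netOut]⟩
  obtain ⟨f, hfK, hmax⟩ := hK.exists_isMaxOn ⟨0, hzero⟩ (continuous_netOut s).continuousOn
  exact ⟨f, hfK.1, hfK.2, ⟨f, hfK.1, hfK.2, rfl⟩,
    fun _ ⟨g, hg, hgc, hF⟩ => hF ▸ hmax ⟨hg, hgc⟩⟩

theorem convex_flowValues (c : V → V → ℝ) (s t : V) : Convex ℝ (flowValues c s t) := by
  rintro _ ⟨f, hf, h, rfl⟩ _ ⟨g, hg, h', rfl⟩ a b ha hb hab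
  refine ⟨a • f + b • g, fun x y => ⟨?_, ?_⟩, fun w hs ht => ?_, ?_⟩
  · exact add_nonneg (mul_nonneg ha (hf x y).1) (mul_nonneg hb (hg x y).1)
  · calc a * f x y + b * g x y ≤ a * c x y + b * c x y :=
          add_le_add (mul_le_mul_of_nonneg_left (hf x y).2 ha)
            (mul_le_mul_of_nonneg_left (hg x y).2 hb)
      _ = c x y := by rw [← add_mul, hab, one_mul]
  · simp [netOut_add, netOut_smul, h w hs ht, h' w hs ht]
  · simp [netOut_add, netOut_smul]

end Flows

section Cuts

variable {V : Type} [DecidableEq V]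

theorem single_single_apply (a b p q : V) :
    (Pi.single a (Pi.single b 1) : V → V → ℝ) p q = if p = a ∧ q = b then 1 else 0 := by
  by_cases hp : p = a
  · subst hp; simp [Pi.single_apply]
  · simp [hp]

variable [Fintype V]

theorem netOut_single_single (a b : V) :
    netOut (Pi.single a (Pi.single b 1)) = Pi.single a 1 - Pi.single b 1 := by
  ext w
  simp [netOut, single_single_apply, Pi.single_apply, ite_and]

theorem exists_isAugmenting_of_reflTransGen {c f : V → V → ℝ} {s x : V}
    (h : Relation.ReflTransGen (ResidualAdj c f) s x) :
    ∃ Δ, IsAugmenting c f Δ ∧ netOut Δ = Pi.single s 1 - Pi.single x 1 := by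
  induction h with
  | refl => exact ⟨0, fun a b => by simp, by ext; simp [netOut]⟩
  | @tail b x _ hbx ih =>
    obtain ⟨Δ, hΔ, hnet⟩ := ih
    rcases hbx with hfwd | hbwd
    · refine ⟨Δ + Pi.single b (Pi.single x 1), fun p q => ?_, ?_⟩
      · by_cases hpq : p = b ∧ q = x
        · obtain ⟨rfl, rfl⟩ := hpq
          simp only [Pi.add_apply, single_single_apply, and_self, if_true]
          exact ⟨fun _ => hfwd, fun hneg => (hΔ p q).2 (by linarith)⟩
        · simpa [single_single_apply, hpq] using hΔ p q
      · rw [netOut_add, hnet, netOut_single_single]; abel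
    · refine ⟨Δ - Pi.single x (Pi.single b 1), fun p q => ?_, ?_⟩
      · by_cases hpq : p = x ∧ q = b
        · obtain ⟨rfl, rfl⟩ := hpq
          simp only [Pi.sub_apply, single_single_apply, and_self, if_true]
          exact ⟨fun hpos => (hΔ p q).1 (by linarith), fun _ => hbwd⟩
        · simpa [single_single_apply, hpq] using hΔ p q
      · rw [netOut_sub, hnet, netOut_single_single]; abel

section

variable {c f : V → V → ℝ} {s t : V}

theorem Conserves.netOut_eq_sum_cut (h : Conserves f s t) {A : Finset V} (hs : s ∈ A)
    (ht : t ∉ A) : netOut f s = ∑ a ∈ A, ∑ b ∈ Aᶜ, (f a b - f b a) := by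
  have hA : ∑ a ∈ A, netOut f a = netOut f s :=
    sum_eq_single_of_mem s hs fun w hw hws => h w hws (ne_of_mem_of_not_mem hw ht)
  rw [← hA]
  simp only [netOut, ← sum_add_sum_compl A, sum_sub_distrib, sum_add_distrib]
  rw [sum_comm (s := A) (t := A) (f := fun a b => f b a)]
  ring

theorem netOut_le_cutCap (hf : Feasible c f) (h : Conserves f s t) {A : Finset V} (hs : s ∈ A)
    (ht : t ∉ A) : netOut f s ≤ cutCap c A := by
  rw [h.netOut_eq_sum_cut hs ht]
  exact sum_le_sum fun a _ => sum_le_sum fun b _ => by linarith [(hf a b).2, (hf b a).1]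

theorem minCut_le_cutCap (hc : ∀ a b, 0 ≤ c a b) {A : Finset V} (hs : s ∈ A) (ht : t ∉ A) :
    minCut c {s} {t} ≤ cutCap c A := by
  refine csInf_le ⟨0, ?_⟩ ⟨A, singleton_subset_iff.2 hs, disjoint_singleton_left.2 ht, rfl⟩
  rintro _ ⟨B, -, -, rfl⟩
  exact sum_nonneg fun a _ => sum_nonneg fun b _ => hc a b

theorem netOut_le_minCut (hf : Feasible c f) (h : Conserves f s t) (hst : s ≠ t) :
    netOut f s ≤ minCut c {s} {t} := by
  refine le_csInf ⟨_, {s}, subset_rfl, disjoint_singleton.2 hst.symm, rfl⟩ ?_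
  rintro _ ⟨A, hs, ht, rfl⟩
  exact netOut_le_cutCap hf h (singleton_subset_iff.1 hs) (disjoint_singleton_left.1 ht)

end

theorem exists_cutCap_eq_of_mem_upperBounds {c f : V → V → ℝ} {s t : V} (hf : Feasible c f)
    (h : Conserves f s t) (hst : s ≠ t) (hmax : netOut f s ∈ upperBounds (flowValues c s t)) :
    ∃ A : Finset V, s ∈ A ∧ t ∉ A ∧ netOut f s = cutCap c A := by
  classical
  let A := univ.filter (Relation.ReflTransGen (ResidualAdj c f) s)
  have hsA : s ∈ A := mem_filter.2 ⟨mem_univ s, .refl⟩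
  have htA : t ∉ A := by
    intro htA
    obtain ⟨Δ, hΔ, hnet⟩ := exists_isAugmenting_of_reflTransGen (mem_filter.1 htA).2
    obtain ⟨δ, hδ, hfeas⟩ := hf.exists_add_smul hΔ
    have hnet' : netOut (f + δ • Δ) = netOut f + δ • (Pi.single s 1 - Pi.single t 1) := by
      rw [netOut_add, netOut_smul, hnet]
    have hmem : netOut f s + δ ∈ flowValues c s t := by
      refine ⟨f + δ • Δ, hfeas, fun w hws hwt => ?_, ?_⟩
      · simp [hnet', h w hws hwt, hws, hwt]
      · simp [hnet', hst]
    linarith [hmax hmem]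
  have hsat {a b : V} (ha : a ∈ A) (hb : b ∉ A) : f a b = c a b ∧ f b a = 0 := by
    have hadj : ¬ ResidualAdj c f a b := fun hab =>
      hb (mem_filter.2 ⟨mem_univ b, (mem_filter.1 ha).2.tail hab⟩)
    simp only [ResidualAdj, not_or, not_lt] at hadj
    exact ⟨le_antisymm (hf a b).2 hadj.1, le_antisymm hadj.2 (hf b a).1⟩
  refine ⟨A, hsA, htA, ?_⟩
  rw [h.netOut_eq_sum_cut hsA htA, cutCap]
  refine sum_congr rfl fun a ha => sum_congr rfl fun b hb => ?_
  rw [(hsat ha (mem_compl.1 hb)).1, (hsat ha (mem_compl.1 hb)).2, sub_zero]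

theorem isGreatest_minCut_flowValues {c : V → V → ℝ} (hc : ∀ a b, 0 ≤ c a b) {s t : V}
    (hst : s ≠ t) : IsGreatest (flowValues c s t) (minCut c {s} {t}) := by
  obtain ⟨f, hf, h, hmax⟩ := exists_isGreatest_flowValues hc s t
  obtain ⟨A, hs, ht, hA⟩ := exists_cutCap_eq_of_mem_upperBounds hf h hst hmax.2
  have : netOut f s = minCut c {s} {t} :=
    (netOut_le_minCut hf h hst).antisymm (hA ▸ minCut_le_cutCap hc hs ht)
  exact this ▸ hmax

theorem flowValues_eq_Icc {c : V → V → ℝ} (hc : ∀ a b, 0 ≤ c a b) {s t : V} (hst : s ≠ t) :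
    flowValues c s t = Set.Icc (-minCut c {t} {s}) (minCut c {s} {t}) := by
  refine Set.Subset.antisymm ?_ ?_
  · rintro _ ⟨f, hf, h, rfl⟩
    have := netOut_le_minCut hf h.symm hst.symm
    rw [h.netOut_target_eq_neg hst] at this
    exact ⟨by linarith, netOut_le_minCut hf h hst⟩
  · obtain ⟨⟨g, hg, h, hval⟩, -⟩ := isGreatest_minCut_flowValues hc hst.symm
    have hlow : -minCut c {t} {s} ∈ flowValues c s t :=
      ⟨g, hg, h.symm, by rw [← hval, h.netOut_target_eq_neg hst.symm]⟩
    exact (convex_flowValues c s t).ordConnected.out hlow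
      (isGreatest_minCut_flowValues hc hst).1

end Cuts

section MapEdges

variable {α β : Type} [Fintype α] [DecidableEq β]

def mapEdges (ι : α → β) (g : α → α → ℝ) : β → β → ℝ := fun x y =>
  ∑ a, ∑ b, if ι a = x ∧ ι b = y then g a b else 0

theorem mapEdges_apply {ι : α → β} (hι : ι.Injective) (g : α → α → ℝ) (a b : α) :
    mapEdges ι g (ι a) (ι b) = g a b := by
  classical
  simp [mapEdges, hι.eq_iff, ite_and]

theorem mapEdges_flip (ι : α → β) (g : α → α → ℝ) :
    mapEdges ι (flip g) = flip (mapEdges ι g) := by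
  ext x y
  simp only [mapEdges, flip]
  rw [sum_comm]
  simp only [and_comm]

theorem mapEdges_eq_zero_of_notMem_range {ι : α → β} (g : α → α → ℝ) {x y : β}
    (h : x ∉ Set.range ι ∨ y ∉ Set.range ι) : mapEdges ι g x y = 0 := by
  refine sum_eq_zero fun a _ => sum_eq_zero fun b _ => if_neg ?_
  rintro ⟨rfl, rfl⟩
  simp at h

theorem feasible_mapEdges {ι : α → β} {c g : α → α → ℝ} (hg : Feasible c g) :
    Feasible (mapEdges ι c) (mapEdges ι g) := fun x y =>
  ⟨sum_nonneg fun a _ => sum_nonneg fun b _ => by split_ifs <;> simp [(hg a b).1],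
    sum_le_sum fun a _ => sum_le_sum fun b _ => by split_ifs <;> simp [(hg a b).2]⟩

theorem Feasible.exists_eq_mapEdges {ι : α → β} (hι : ι.Injective) {c : α → α → ℝ}
    {f : β → β → ℝ} (hf : Feasible (mapEdges ι c) f) :
    ∃ g, Feasible c g ∧ f = mapEdges ι g := by
  refine ⟨fun a b => f (ι a) (ι b), fun a b => ?_, ?_⟩
  · simpa [mapEdges_apply hι] using hf (ι a) (ι b)
  · ext x y
    by_cases hxy : x ∈ Set.range ι ∧ y ∈ Set.range ι
    · obtain ⟨⟨a, rfl⟩, ⟨b, rfl⟩⟩ := hxy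
      rw [mapEdges_apply hι]
    · rw [not_and_or] at hxy
      have := hf x y
      rw [mapEdges_eq_zero_of_notMem_range _ hxy] at this ⊢
      exact le_antisymm this.2 this.1

variable [Fintype β]

theorem sum_mapEdges_left (ι : α → β) (g : α → α → ℝ) (x : β) :
    ∑ y, mapEdges ι g x y = ∑ a ∈ univ.filter (ι · = x), ∑ b, g a b := by
  simp only [mapEdges, sum_filter]
  rw [sum_comm]
  refine sum_congr rfl fun a _ => ?_
  rw [sum_comm]
  split_ifs with ha <;> simp [ha]

theorem sum_mapEdges_right (ι : α → β) (g : α → α → ℝ) (x : β) :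
    ∑ y, mapEdges ι g y x = ∑ b ∈ univ.filter (ι · = x), ∑ a, g a b := by
  simpa only [mapEdges_flip, flip] using sum_mapEdges_left ι (flip g) x

theorem netOut_mapEdges (ι : α → β) (g : α → α → ℝ) (x : β) :
    netOut (mapEdges ι g) x = ∑ a ∈ univ.filter (ι · = x), netOut g a := by
  rw [netOut, sum_mapEdges_left, sum_mapEdges_right, ← sum_sub_distrib]
  rfl

theorem netOut_mapEdges_apply {ι : α → β} (hι : ι.Injective) (g : α → α → ℝ) (a : α) :
    netOut (mapEdges ι g) (ι a) = netOut g a := by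
  classical
  simp [netOut_mapEdges, sum_filter, hι.eq_iff]

theorem netOut_mapEdges_of_notMem_range {ι : α → β} (g : α → α → ℝ) {x : β}
    (hx : x ∉ Set.range ι) : netOut (mapEdges ι g) x = 0 := by
  rw [netOut_mapEdges, sum_eq_zero]
  intro a ha
  exact absurd ⟨a, (mem_filter.1 ha).2⟩ hx

end MapEdges

section Glue

variable {V1 V2 : Type} [DecidableEq V2] {u v : V1} {u2 v2 : V2}

theorem glueMap_injective (huv : u ≠ v) : (glueMap u v u2 v2).Injective := by
  intro a b hab
  unfold glueMap at hab
  split_ifs at hab <;> simp_all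

theorem glueMap_left : glueMap u v u2 v2 u2 = Sum.inl u := by simp [glueMap]

theorem glueMap_right (huv2 : u2 ≠ v2) : glueMap u v u2 v2 v2 = Sum.inl v := by
  simp [glueMap, huv2.symm]

theorem glueMap_val (b : {w : V2 // w ≠ u2 ∧ w ≠ v2}) :
    glueMap u v u2 v2 b.1 = Sum.inr b := by
  simp [glueMap, b.2.1, b.2.2]

theorem inl_notMem_range_glueMap {p : V1} (hu : p ≠ u) (hv : p ≠ v) :
    Sum.inl p ∉ Set.range (glueMap u v u2 v2) := by
  rintro ⟨w, hw⟩
  unfold glueMap at hw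
  split_ifs at hw <;> simp_all

variable [Fintype V1] [DecidableEq V1] [Fintype V2]

def glue (f : V1 → V1 → ℝ) (g : V2 → V2 → ℝ) (u v : V1) (u2 v2 : V2) :
    (V1 ⊕ {w : V2 // w ≠ u2 ∧ w ≠ v2}) → (V1 ⊕ {w : V2 // w ≠ u2 ∧ w ≠ v2}) → ℝ :=
  mapEdges Sum.inl f + mapEdges (glueMap u v u2 v2) g

theorem glueCap_eq_glue (c1 : V1 → V1 → ℝ) (c2 : V2 → V2 → ℝ) :
    glueCap c1 c2 u v u2 v2 = glue c1 c2 u v u2 v2 := by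
  ext x y
  rw [glue, Pi.add_apply, Pi.add_apply]
  rcases x with p | x <;> rcases y with q | y
  · show c1 p q + _ = _
    rw [mapEdges_apply Sum.inl_injective]
    rfl
  all_goals
    show 0 + _ = _
    rw [mapEdges_eq_zero_of_notMem_range _ (by simp)]
    rfl

theorem feasible_glue {c1 f : V1 → V1 → ℝ} {c2 g : V2 → V2 → ℝ} (hf : Feasible c1 f)
    (hg : Feasible c2 g) : Feasible (glue c1 c2 u v u2 v2) (glue f g u v u2 v2) :=
  (feasible_mapEdges hf).add (feasible_mapEdges hg)

theorem Feasible.exists_eq_glue {c1 : V1 → V1 → ℝ} {c2 : V2 → V2 → ℝ}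
    (h1 : ∀ a b, 0 ≤ c1 a b) (h2 : ∀ a b, 0 ≤ c2 a b) (huv : u ≠ v) {f}
    (hf : Feasible (glue c1 c2 u v u2 v2) f) :
    ∃ f₁ g, Feasible c1 f₁ ∧ Feasible c2 g ∧ f = glue f₁ g u v u2 v2 := by
  obtain ⟨f₁', g', hf₁', hg', rfl⟩ :=
    hf.exists_add (fun x y => (feasible_mapEdges (fun a b => ⟨h1 a b, le_rfl⟩) x y).1)
      (fun x y => (feasible_mapEdges (fun a b => ⟨h2 a b, le_rfl⟩) x y).1)
  obtain ⟨f₁, hf₁, rfl⟩ := hf₁'.exists_eq_mapEdges Sum.inl_injective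
  obtain ⟨g, hg, rfl⟩ := hg'.exists_eq_mapEdges (glueMap_injective huv)
  exact ⟨f₁, g, hf₁, hg, rfl⟩

theorem netOut_glue_inl (huv : u ≠ v) (huv2 : u2 ≠ v2) (f : V1 → V1 → ℝ) (g : V2 → V2 → ℝ)
    (p : V1) :
    netOut (glue f g u v u2 v2) (Sum.inl p) = netOut f p +
      ((if p = u then netOut g u2 else 0) + (if p = v then netOut g v2 else 0)) := by
  rw [glue, netOut_add, Pi.add_apply, netOut_mapEdges_apply Sum.inl_injective]
  congr 1
  by_cases hu : p = u
  · subst hu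
    rw [← glueMap_left, netOut_mapEdges_apply (glueMap_injective huv)]
    simp [huv]
  by_cases hv : p = v
  · subst hv
    rw [← glueMap_right huv2, netOut_mapEdges_apply (glueMap_injective huv)]
    simp [hu]
  rw [netOut_mapEdges_of_notMem_range _ (inl_notMem_range_glueMap hu hv)]
  simp [hu, hv]

theorem netOut_glue_inr (huv : u ≠ v) (f : V1 → V1 → ℝ) (g : V2 → V2 → ℝ)
    (b : {w : V2 // w ≠ u2 ∧ w ≠ v2}) :
    netOut (glue f g u v u2 v2) (Sum.inr b) = netOut g b.1 := by
  rw [glue, netOut_add, Pi.add_apply, ← glueMap_val,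
    netOut_mapEdges_apply (glueMap_injective huv), glueMap_val,
    netOut_mapEdges_of_notMem_range _ (by simp), zero_add]

theorem flowValues_glue_subset {V2' : Type} [DecidableEq V2'] [Fintype V2']
    {c1 : V1 → V1 → ℝ} {c2 : V2 → V2 → ℝ} {c2' : V2' → V2' → ℝ}
    (h1 : ∀ a b, 0 ≤ c1 a b) (h2 : ∀ a b, 0 ≤ c2 a b) (huv : u ≠ v) (huv2 : u2 ≠ v2)
    {u2' v2' : V2'} (huv2' : u2' ≠ v2') (h : flowValues c2 u2 v2 ⊆ flowValues c2' u2' v2')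
    (s t : V1) :
    flowValues (glue c1 c2 u v u2 v2) (Sum.inl s) (Sum.inl t) ⊆
      flowValues (glue c1 c2' u v u2' v2') (Sum.inl s) (Sum.inl t) := by
  rintro _ ⟨f, hf, hcons, rfl⟩
  obtain ⟨f₁, g, hf₁, hg, rfl⟩ := hf.exists_eq_glue h1 h2 huv
  have hgcons : Conserves g u2 v2 := fun w hu hv => by
    simpa [netOut_glue_inr huv] using hcons (Sum.inr ⟨w, hu, hv⟩) (by simp) (by simp)
  obtain ⟨g', hg', hg'cons, hu⟩ := h ⟨g, hg, hgcons, rfl⟩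
  have hv : netOut g' v2' = netOut g v2 := by
    rw [hg'cons.netOut_target_eq_neg huv2', hgcons.netOut_target_eq_neg huv2, hu]
  have hinl (p : V1) : netOut (glue f₁ g' u v u2' v2') (Sum.inl p) =
      netOut (glue f₁ g u v u2 v2) (Sum.inl p) := by
    rw [netOut_glue_inl huv huv2, netOut_glue_inl huv huv2', hu, hv]
  refine ⟨glue f₁ g' u v u2' v2', feasible_glue hf₁ hg', ?_, hinl s⟩
  rintro (p | b) hs ht
  · rw [hinl]
    exact hcons _ (by simpa using hs) (by simpa using ht)
  · rw [netOut_glue_inr huv]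
    exact hg'cons _ b.2.1 b.2.2

end Glue

end Network

open Network

theorem stmt10 {V1 V2 V2' : Type}
    [Fintype V1] [DecidableEq V1] [Fintype V2] [DecidableEq V2]
    [Fintype V2'] [DecidableEq V2']
    (c1 : V1 → V1 → ℝ) (c2 : V2 → V2 → ℝ) (c2' : V2' → V2' → ℝ)
    (h1 : ∀ u v, 0 ≤ c1 u v) (h2 : ∀ u v, 0 ≤ c2 u v) (h2' : ∀ u v, 0 ≤ c2' u v)
    (s t u v : V1) (huv : u ≠ v)
    (u2 v2 : V2) (huv2 : u2 ≠ v2) (u2' v2' : V2') (huv2' : u2' ≠ v2')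
    (hmimic1 : minCut c2 {u2} {v2} = minCut c2' {u2'} {v2'})
    (hmimic2 : minCut c2 {v2} {u2} = minCut c2' {v2'} {u2'}) :
    maxFlowVal (glueCap c1 c2 u v u2 v2) (Sum.inl s) (Sum.inl t) =
      maxFlowVal (glueCap c1 c2' u v u2' v2') (Sum.inl s) (Sum.inl t) := by
  have hflow : flowValues c2 u2 v2 = flowValues c2' u2' v2' := by
    rw [flowValues_eq_Icc h2 huv2, flowValues_eq_Icc h2' huv2', hmimic1, hmimic2]
  rw [maxFlowVal_eq_sSup, maxFlowVal_eq_sSup, glueCap_eq_glue, glueCap_eq_glue,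
    (flowValues_glue_subset h1 h2 huv huv2 huv2' hflow.le s t).antisymm
      (flowValues_glue_subset h1 h2' huv huv2' huv2 hflow.ge s t)]
end
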